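/- Let A = [[0, λI−A₀, B],[−λI−A₀ᵀ, −C₀ᵀQC₀, 0],[−B₀ᵀ, 0, 0]] be the Hamiltonian matrix P_H^y(λ) for real matrices A₀ (n×n), B₀ (n×m), C₀ (p×n), Q symmetric positive definite (p×p), and λ purely imaginary. Suppose ν̂ = (ν_s, ν_{c1}, ν_{c2}) ∈ ℂ^n × ℂ^n × ℂ^m satisfies P_H^y(λ) ν̂ = 0. Then, setting ν̃ = −Q C₀ ν_{c1}, one has ν̃ᴴ Q⁻¹ ν̃ = 0, hence C₀ ν_{c1} = 0. -/

import Mathlib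

/-!
Write `w = C₀ ν_{c1}`. Because `λ̄ = −λ` and `A₀` is real, the second block row of
`P_H^y(λ) ν̂ = 0` says `(λI − A₀)ᴴ ν_s = C₀ᵀ Q C₀ ν_{c1}`, so by the first and third block rows
`wᴴ Q w = ((λI − A₀) ν_{c1})ᴴ ν_s = −(B₀ ν_{c2})ᴴ ν_s = −ν_{c2}ᴴ B₀ᵀ ν_s = 0`.
A real positive definite `Q` stays positive definite over `ℂ`, so `w = 0`.
-/

open Matrix

/-- Hamiltonian matrix `P_H^y(λ) = [[0, λI−A, B], [−λI−Aᵀ, −CᵀQC, 0], [−Bᵀ, 0, 0]]`. -/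
noncomputable def HamMatY {n m p : ℕ} (A : Matrix (Fin n) (Fin n) ℝ) (B : Matrix (Fin n) (Fin m) ℝ)
    (C : Matrix (Fin p) (Fin n) ℝ) (Q : Matrix (Fin p) (Fin p) ℝ) (l : ℂ) :
    Matrix ((Fin n ⊕ Fin n) ⊕ Fin m) ((Fin n ⊕ Fin n) ⊕ Fin m) ℂ :=
  Matrix.fromBlocks
    (Matrix.fromBlocks 0 (l • 1 - A.map Complex.ofReal)
      (-(l • 1) - (A.map Complex.ofReal)ᵀ)
      (-((C.map Complex.ofReal)ᵀ * Q.map Complex.ofReal * C.map Complex.ofReal)))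
    (Matrix.fromRows (B.map Complex.ofReal) 0)
    (Matrix.fromCols (-(B.map Complex.ofReal)ᵀ) 0) 0

namespace Matrix

variable {n m : Type*}

lemma re_star_dotProduct_map_ofReal_mulVec [Fintype n] (Q : Matrix n n ℝ) (v : n → ℂ) :
    (star v ⬝ᵥ Q.map Complex.ofReal *ᵥ v).re =
      (fun i => (v i).re) ⬝ᵥ Q *ᵥ (fun i => (v i).re) +
        (fun i => (v i).im) ⬝ᵥ Q *ᵥ (fun i => (v i).im) := by
  simp only [dotProduct, mulVec, Matrix.map_apply, Pi.star_apply, Finset.mul_sum,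
    Complex.re_sum, ← Finset.sum_add_distrib]
  refine Finset.sum_congr rfl fun i _ => Finset.sum_congr rfl fun j _ => ?_
  simp only [Complex.star_def, Complex.mul_re, Complex.conj_re, Complex.conj_im,
    Complex.ofReal_re, Complex.ofReal_im, Complex.mul_im]
  ring

open scoped ComplexOrder in
lemma PosDef.map_ofReal [Fintype n] {Q : Matrix n n ℝ} (hQ : Q.PosDef) :
    (Q.map Complex.ofReal).PosDef := by
  have hherm : (Q.map Complex.ofReal).IsHermitian :=
    hQ.isHermitian.map _ fun x => (Complex.conj_ofReal x).symm
  refine PosDef.of_dotProduct_mulVec_pos hherm fun v hv => ?_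
  rw [Complex.lt_def]
  refine ⟨?_, (hherm.im_star_dotProduct_mulVec_self v).symm⟩
  rw [re_star_dotProduct_map_ofReal_mulVec, Complex.zero_re]
  have hre := hQ.posSemidef.dotProduct_mulVec_nonneg (fun i => (v i).re)
  have him := hQ.posSemidef.dotProduct_mulVec_nonneg (fun i => (v i).im)
  simp only [star_trivial] at hre him
  by_cases hre_zero : (fun i => (v i).re) = 0
  · have him_ne : (fun i => (v i).im) ≠ 0 := fun him_zero =>
      hv (funext fun i => Complex.ext (congrFun hre_zero i) (congrFun him_zero i))
    simpa [hre_zero] using hQ.dotProduct_mulVec_pos him_ne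
  · have := hQ.dotProduct_mulVec_pos hre_zero
    simp only [star_trivial] at this
    linarith

lemma conjTranspose_map_ofReal (A : Matrix m n ℝ) :
    (A.map Complex.ofReal)ᴴ = (A.map Complex.ofReal)ᵀ := by
  ext i j
  simp

lemma star_dotProduct_mulVec_eq_zero_of_adjoint_system {R : Type*} [CommRing R] [StarRing R]
    [Fintype n] [Fintype m] {M : Matrix n n R} {B : Matrix n m R} {W : Matrix n n R}
    {x s : n → R} {y : m → R}
    (hx : M *ᵥ x + B *ᵥ y = 0) (hs : Mᴴ *ᵥ s = W *ᵥ x) (hB : Bᴴ *ᵥ s = 0) :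
    star x ⬝ᵥ W *ᵥ x = 0 := by
  rw [← hs, dotProduct_mulVec, ← star_mulVec, eq_neg_of_add_eq_zero_left hx, star_neg,
    star_mulVec, neg_dotProduct, ← dotProduct_mulVec, hB, dotProduct_zero, neg_zero]

end Matrix

section HamMatY

variable {n m p : ℕ} (A : Matrix (Fin n) (Fin n) ℝ) (B : Matrix (Fin n) (Fin m) ℝ)
  (C : Matrix (Fin p) (Fin n) ℝ) (Q : Matrix (Fin p) (Fin p) ℝ) (l : ℂ)

lemma HamMatY_mulVec_eq_zero_iff (νs νc1 : Fin n → ℂ) (νc2 : Fin m → ℂ) :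
    HamMatY A B C Q l *ᵥ Sum.elim (Sum.elim νs νc1) νc2 = 0 ↔
      (l • 1 - A.map Complex.ofReal) *ᵥ νc1 + B.map Complex.ofReal *ᵥ νc2 = 0 ∧
      (-(l • 1) - (A.map Complex.ofReal)ᵀ) *ᵥ νs =
        ((C.map Complex.ofReal)ᵀ * Q.map Complex.ofReal * C.map Complex.ofReal) *ᵥ νc1 ∧
      (B.map Complex.ofReal)ᵀ *ᵥ νs = 0 := by
  simp only [HamMatY, fromBlocks_mulVec, fromRows_mulVec, fromCols_mulVec_sumElim,
    Sum.elim_comp_inl, Sum.elim_comp_inr, zero_mulVec, add_zero, zero_add, neg_mulVec,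
    ← Sum.elim_add_add, ← Sum.elim_zero_zero, Sum.elim_eq_iff, neg_eq_zero, ← sub_eq_add_neg,
    sub_eq_zero, and_assoc]

lemma conjTranspose_smul_one_sub_map_ofReal (hl : l.re = 0) :
    (l • 1 - A.map Complex.ofReal)ᴴ = -(l • 1) - (A.map Complex.ofReal)ᵀ := by
  have hl_conj : star l = -l := Complex.ext (by simp [hl]) (by simp)
  rw [conjTranspose_sub, conjTranspose_smul, conjTranspose_one, hl_conj, neg_smul,
    conjTranspose_map_ofReal]

end HamMatY

/-- Kernel analysis in the proof of Lemma 3: if `P_H^y(λ) ν̂ = 0` with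
`ν̂ = (ν_s, ν_{c1}, ν_{c2})`, then with `ν̃ = −Q C ν_{c1}` one has `ν̃ᴴ Q⁻¹ ν̃ = 0` and hence
`C ν_{c1} = 0`. -/
theorem stmt19 {n m p : ℕ} (A : Matrix (Fin n) (Fin n) ℝ) (B : Matrix (Fin n) (Fin m) ℝ)
    (C : Matrix (Fin p) (Fin n) ℝ) (Q : Matrix (Fin p) (Fin p) ℝ)
    (hQ : Q.PosDef) (l : ℂ) (hl : l.re = 0)
    (νs νc1 : Fin n → ℂ) (νc2 : Fin m → ℂ)
    (h : (HamMatY A B C Q l).mulVec (Sum.elim (Sum.elim νs νc1) νc2) = 0) :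
    (star (-(Q.map Complex.ofReal).mulVec ((C.map Complex.ofReal).mulVec νc1)) ⬝ᵥ
        ((Q.map Complex.ofReal)⁻¹).mulVec
          (-(Q.map Complex.ofReal).mulVec ((C.map Complex.ofReal).mulVec νc1))) = 0 ∧
      (C.map Complex.ofReal).mulVec νc1 = 0 := by
  obtain ⟨h_state, h_costate, h_input⟩ := (HamMatY_mulVec_eq_zero_iff A B C Q l _ _ _).mp h
  rw [← conjTranspose_smul_one_sub_map_ofReal A l hl] at h_costate
  rw [← conjTranspose_map_ofReal] at h_costate h_input
  have h_quad := star_dotProduct_mulVec_eq_zero_of_adjoint_system h_state h_costate h_input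
  rw [← mulVec_mulVec, ← mulVec_mulVec, dotProduct_mulVec, ← star_mulVec] at h_quad
  have hCν : (C.map Complex.ofReal).mulVec νc1 = 0 := by
    by_contra hne
    open scoped ComplexOrder in exact (hQ.map_ofReal.dotProduct_mulVec_pos hne).ne' h_quad
  exact ⟨by simp [hCν], hCν⟩
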